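/- arXiv:2208.08991 — 2 statements merged into one kernel-verified Lean document; each statement's English description precedes it below -/
import Mathlib

section
/- Variance of the equivalent-linear-system importance sampling estimator: let M_L : ℝⁿ → ℝ be measurable with |M_L|·f Lebesgue-integrable and μ_{|L|} = ∫ |M_L(x)| f(x) dx > 0, define h_L*(x) = |M_L(x)| f(x)/μ_{|L|}, and suppose M_L(x) ≠ 0 for almost every x with M(x) f(x) ≠ 0, that M²·f is Lebesgue-integrable, and that (M²/|M_L|)·f (defined as 0 on {M_L = 0}) is Lebesgue-integrable. Then the variance under h_L* of the estimator μ_{|L|} M(X)/|M_L(X)| equals Var_f[M(X)] − Cov_f(M(X)²/|M_L(X)|, |M_L(X)|), where Var_f and Cov_f denote variance and covariance when X has density f. -/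
open MeasureTheory ProbabilityTheory
open scoped NNReal ENNReal

/-- Covariance of two real random variables under a measure `μ`. -/
noncomputable def cov {Ω : Type*} [MeasurableSpace Ω] (μ : Measure Ω) (X Y : Ω → ℝ) : ℝ :=
  ∫ ω, (X ω - ∫ ω', X ω' ∂μ) * (Y ω - ∫ ω', Y ω' ∂μ) ∂μ

private lemma int_wd {α : Type*} [MeasurableSpace α] {μ : Measure α} {g : α → ℝ}
    (hg : Measurable g) (hg0 : ∀ x, 0 ≤ g x) (φ : α → ℝ) :
    ∫ x, φ x ∂(μ.withDensity fun x => ENNReal.ofReal (g x)) = ∫ x, g x * φ x ∂μ := by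
  rw [show (fun x => ENNReal.ofReal (g x)) = fun x => ((Real.toNNReal (g x) : ℝ≥0) : ℝ≥0∞)
      from rfl,
    integral_withDensity_eq_integral_smul hg.real_toNNReal]
  congr 1
  ext x
  simp [NNReal.smul_def, Real.coe_toNNReal _ (hg0 x)]

private lemma cov_eq {Ω : Type*} [MeasurableSpace Ω] (μ : Measure Ω) [IsProbabilityMeasure μ]
    {X Y : Ω → ℝ} (hX : Integrable X μ) (hY : Integrable Y μ)
    (hXY : Integrable (fun ω => X ω * Y ω) μ) :
    cov μ X Y = (∫ ω, X ω * Y ω ∂μ) - (∫ ω, X ω ∂μ) * (∫ ω, Y ω ∂μ) := by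
  have h : ∀ ω, (X ω - ∫ ω', X ω' ∂μ) * (Y ω - ∫ ω', Y ω' ∂μ)
      = X ω * Y ω - ((∫ ω', X ω' ∂μ) * Y ω + (∫ ω', Y ω' ∂μ) * X ω
        - (∫ ω', X ω' ∂μ) * (∫ ω', Y ω' ∂μ)) := fun ω => by ring
  have h1 : Integrable (fun ω => (∫ ω', X ω' ∂μ) * Y ω) μ := hY.const_mul _
  have h2 : Integrable (fun ω => (∫ ω', Y ω' ∂μ) * X ω) μ := hX.const_mul _
  have h3 : Integrable (fun ω => (∫ ω', X ω' ∂μ) * Y ω + (∫ ω', Y ω' ∂μ) * X ω) μ := h1.add h2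
  have h4 : Integrable (fun ω => ((∫ ω', X ω' ∂μ) * Y ω + (∫ ω', Y ω' ∂μ) * X ω)
      - (∫ ω', X ω' ∂μ) * (∫ ω', Y ω' ∂μ)) μ := h3.sub (integrable_const _)
  unfold cov
  simp_rw [h]
  rw [integral_sub hXY h4, integral_sub h3 (integrable_const _), integral_add h1 h2,
    integral_const_mul, integral_const_mul, integral_const, probReal_univ]
  simp
  ring

/-- Variance of the equivalent-linear-system importance sampling estimator: with
`μ_{|L|} = ∫ |M_L| f > 0`, `h_L*(x) = |M_L(x)| f(x)/μ_{|L|}`, and assuming `M_L ≠ 0`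
a.e. on `{M f ≠ 0}`, `M² f` integrable and `(M²/|M_L|) f` integrable (set to `0` on
`{M_L = 0}`), the variance under `h_L*` of the estimator `μ_{|L|} M / |M_L|` equals
`Var_f[M] - Cov_f(M²/|M_L|, |M_L|)`, where `Var_f`, `Cov_f` are taken with `X ∼ f`. -/
theorem linear_system_importance_sampling_variance {n : ℕ}
    (f M ML : (Fin n → ℝ) → ℝ) (μL : ℝ)
    (hf_meas : Measurable f) (hf_nonneg : ∀ x, 0 ≤ f x) (hf_one : ∫ x, f x = 1)
    (hM_meas : Measurable M) (hMf_int : Integrable (fun x => M x * f x))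
    (hML_meas : Measurable ML) (hMLf_int : Integrable (fun x => |ML x| * f x))
    (hμL : μL = ∫ x, |ML x| * f x) (hμL_pos : 0 < μL)
    (hdom : ∀ᵐ x, M x * f x ≠ 0 → ML x ≠ 0)
    (hM2f_int : Integrable (fun x => (M x) ^ 2 * f x))
    (hM2MLf_int :
      Integrable (fun x => (if ML x = 0 then 0 else (M x) ^ 2 / |ML x|) * f x)) :
    variance (fun x => if ML x = 0 then 0 else μL * M x / |ML x|)
        (volume.withDensity fun x => ENNReal.ofReal (|ML x| * f x / μL)) =
      variance M (volume.withDensity fun x => ENNReal.ofReal (f x)) -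
        cov (volume.withDensity fun x => ENNReal.ofReal (f x))
          (fun x => if ML x = 0 then 0 else (M x) ^ 2 / |ML x|)
          (fun x => |ML x|) := by
  classical
  set Y : (Fin n → ℝ) → ℝ := fun x => if ML x = 0 then 0 else μL * M x / |ML x| with hY_def
  set G : (Fin n → ℝ) → ℝ := fun x => if ML x = 0 then 0 else (M x) ^ 2 / |ML x| with hG_def
  set g : (Fin n → ℝ) → ℝ := fun x => |ML x| * f x / μL with hg_def
  have hf_int : Integrable f := by
    by_contra h
    rw [integral_undef h] at hf_one; norm_num at hf_one
  have hg_meas : Measurable g := (hML_meas.abs.mul hf_meas).div_const _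
  have hg0 : ∀ x, 0 ≤ g x := fun x =>
    div_nonneg (mul_nonneg (abs_nonneg _) (hf_nonneg x)) hμL_pos.le
  have hg_int : Integrable g := hMLf_int.div_const _
  have hg_one : ∫ x, g x = 1 := by
    simp only [hg_def, integral_div, ← hμL, div_self hμL_pos.ne']
  have hprob : ∀ (h : (Fin n → ℝ) → ℝ), (∀ x, 0 ≤ h x) → Integrable h →
      (∫ x, h x) = 1 →
      IsProbabilityMeasure (volume.withDensity fun x => ENNReal.ofReal (h x)) := by
    intro h h0 hi h1
    constructor
    rw [withDensity_apply _ MeasurableSet.univ, setLIntegral_univ,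
      ← ofReal_integral_eq_lintegral_ofReal hi (ae_of_all _ h0), h1, ENNReal.ofReal_one]
  have hPν : IsProbabilityMeasure (volume.withDensity fun x => ENNReal.ofReal (f x)) :=
    hprob f hf_nonneg hf_int hf_one
  have hPη : IsProbabilityMeasure (volume.withDensity fun x => ENNReal.ofReal (g x)) :=
    hprob g hg0 hg_int hg_one
  have hML0 : MeasurableSet {x | ML x = 0} := hML_meas (measurableSet_singleton 0)
  have hY_meas : Measurable Y :=
    Measurable.ite hML0 measurable_const ((measurable_const.mul hM_meas).div hML_meas.abs)
  have hG_meas : Measurable G :=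
    Measurable.ite hML0 measurable_const ((hM_meas.pow_const 2).div hML_meas.abs)
  -- a.e. facts
  have hdom' : ∀ᵐ x, ML x = 0 → M x * f x = 0 := by
    filter_upwards [hdom] with x hx
    intro h0
    by_contra hc
    exact hx hc h0
  -- pointwise / a.e. identities
  have E1 : (fun x => g x * Y x) =ᵐ[volume] fun x => M x * f x := by
    filter_upwards [hdom'] with x hx
    by_cases h0 : ML x = 0
    · simp [hY_def, h0, hx h0]
    · simp only [hY_def, hg_def, if_neg h0]
      set a := |ML x| with ha
      have habs : a ≠ 0 := abs_ne_zero.mpr h0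
      field_simp
  have E2 : ∀ x, g x * Y x ^ 2 = μL * (G x * f x) := by
    intro x
    by_cases h0 : ML x = 0
    · simp [hY_def, hG_def, h0]
    · simp only [hY_def, hG_def, hg_def, if_neg h0]
      set a := |ML x| with ha
      have habs : a ≠ 0 := abs_ne_zero.mpr h0
      field_simp
  have E3 : (fun x => f x * (G x * |ML x|)) =ᵐ[volume] fun x => M x ^ 2 * f x := by
    filter_upwards [hdom'] with x hx
    by_cases h0 : ML x = 0
    · have : M x ^ 2 * f x = M x * (M x * f x) := by ring
      simp [hG_def, h0, this, hx h0]
    · simp only [hG_def, if_neg h0]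
      set a := |ML x| with ha
      have habs : a ≠ 0 := abs_ne_zero.mpr h0
      field_simp
  -- integrals under the two measures
  have EηY : ∫ x, Y x ∂(volume.withDensity fun x => ENNReal.ofReal (g x))
      = ∫ x, M x * f x := by
    rw [int_wd hg_meas hg0]
    exact integral_congr_ae E1
  have EηY2 : ∫ x, Y x ^ 2 ∂(volume.withDensity fun x => ENNReal.ofReal (g x))
      = μL * ∫ x, G x * f x := by
    rw [int_wd hg_meas hg0]
    simp_rw [E2]
    rw [integral_const_mul]
  have EνM : ∫ x, M x ∂(volume.withDensity fun x => ENNReal.ofReal (f x))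
      = ∫ x, M x * f x := by
    rw [int_wd hf_meas hf_nonneg]
    exact integral_congr_ae (ae_of_all _ fun x => mul_comm _ _)
  have EνM2 : ∫ x, M x ^ 2 ∂(volume.withDensity fun x => ENNReal.ofReal (f x))
      = ∫ x, M x ^ 2 * f x := by
    rw [int_wd hf_meas hf_nonneg]
    exact integral_congr_ae (ae_of_all _ fun x => mul_comm _ _)
  have EνG : ∫ x, G x ∂(volume.withDensity fun x => ENNReal.ofReal (f x))
      = ∫ x, G x * f x := by
    rw [int_wd hf_meas hf_nonneg]
    exact integral_congr_ae (ae_of_all _ fun x => mul_comm _ _)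
  have EνML : ∫ x, |ML x| ∂(volume.withDensity fun x => ENNReal.ofReal (f x)) = μL := by
    rw [int_wd hf_meas hf_nonneg, hμL]
    exact integral_congr_ae (ae_of_all _ fun x => mul_comm _ _)
  have EνGML : ∫ x, G x * |ML x| ∂(volume.withDensity fun x => ENNReal.ofReal (f x))
      = ∫ x, M x ^ 2 * f x := by
    rw [int_wd hf_meas hf_nonneg]
    exact integral_congr_ae E3
  -- integrability statements
  have iwd : ∀ (h φ : (Fin n → ℝ) → ℝ), Measurable h → (∀ x, 0 ≤ h x) →
      Integrable (fun x => φ x * h x) →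
      Integrable φ (volume.withDensity fun x => ENNReal.ofReal (h x)) := by
    intro h φ hm h0 hi
    rw [integrable_withDensity_iff hm.ennreal_ofReal
      (ae_of_all _ fun x => ENNReal.ofReal_lt_top)]
    refine hi.congr ?_
    filter_upwards with x
    rw [ENNReal.toReal_ofReal (h0 x)]
  have hGν : Integrable G (volume.withDensity fun x => ENNReal.ofReal (f x)) :=
    iwd f G hf_meas hf_nonneg hM2MLf_int
  have hMLν : Integrable (fun x => |ML x|) (volume.withDensity fun x => ENNReal.ofReal (f x)) :=
    iwd f _ hf_meas hf_nonneg hMLf_int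
  have hGMLν : Integrable (fun x => G x * |ML x|)
      (volume.withDensity fun x => ENNReal.ofReal (f x)) := by
    refine iwd f _ hf_meas hf_nonneg ?_
    refine hM2f_int.congr ?_
    refine (E3.symm).trans ?_
    filter_upwards with x
    ring
  have hMν2 : MemLp M 2 (volume.withDensity fun x => ENNReal.ofReal (f x)) := by
    rw [memLp_two_iff_integrable_sq hM_meas.aestronglyMeasurable]
    exact iwd f _ hf_meas hf_nonneg hM2f_int
  have hYη2 : MemLp Y 2 (volume.withDensity fun x => ENNReal.ofReal (g x)) := by
    rw [memLp_two_iff_integrable_sq hY_meas.aestronglyMeasurable]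
    refine iwd g _ hg_meas hg0 ?_
    refine (hM2MLf_int.const_mul μL).congr ?_
    filter_upwards with x
    rw [← E2 x]
    ring
  -- put everything together
  rw [variance_eq_sub hYη2, variance_eq_sub hMν2, cov_eq _ hGν hMLν hGMLν]
  simp only [Pi.pow_apply]
  rw [EηY2, EηY, EνM2, EνM, EνG, EνML, EνGML]
  ring
end

section
/- Corollary (variance reduction criterion): under the hypotheses of the variance formula for the equivalent-linear-system importance sampling estimator, the estimator μ_{|L|} M(X)/|M_L(X)| sampled from h_L* has strictly smaller variance than the crude Monte Carlo estimator M(X) sampled from f if and only if Cov_f(M(X)²/|M_L(X)|, |M_L(X)|) > 0, i.e. if and only if M²/|M_L| and |M_L| are positively correlated under f. -/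
open MeasureTheory ProbabilityTheory Filter
open scoped ENNReal NNReal

lemma wd_integral {α : Type*} [MeasurableSpace α] (μ0 : Measure α) (ρ : α → ℝ)
    (hρ : Measurable ρ) (hρ0 : ∀ x, 0 ≤ ρ x) (g : α → ℝ) :
    ∫ x, g x ∂(μ0.withDensity fun x => ENNReal.ofReal (ρ x)) = ∫ x, g x * ρ x ∂μ0 := by
  have h1 : (fun x => ENNReal.ofReal (ρ x)) = fun x => ((Real.toNNReal (ρ x) : ℝ≥0) : ℝ≥0∞) :=
    rfl
  rw [h1, integral_withDensity_eq_integral_smul (hρ.real_toNNReal) g]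
  congr 1; ext x
  simp [NNReal.smul_def, Real.coe_toNNReal _ (hρ0 x), mul_comm]

lemma wd_integrable {α : Type*} [MeasurableSpace α] (μ0 : Measure α) (ρ : α → ℝ)
    (hρ : Measurable ρ) (hρ0 : ∀ x, 0 ≤ ρ x) (g : α → ℝ) :
    Integrable g (μ0.withDensity fun x => ENNReal.ofReal (ρ x)) ↔
      Integrable (fun x => g x * ρ x) μ0 := by
  rw [integrable_withDensity_iff (hρ.ennreal_ofReal)
      (Filter.Eventually.of_forall fun x => ENNReal.ofReal_lt_top)]
  constructor <;> intro h <;> refine h.congr (Filter.Eventually.of_forall fun x => ?_) <;>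
    simp [ENNReal.toReal_ofReal (hρ0 x)]

/-- Variance reduction criterion: under the hypotheses of the variance formula for the
equivalent-linear-system importance sampling estimator, the estimator `μ_{|L|} M / |M_L|`
sampled from `h_L*` has strictly smaller variance than the crude Monte Carlo estimator
`M` sampled from `f` if and only if `Cov_f(M²/|M_L|, |M_L|) > 0`. -/
theorem linear_system_importance_sampling_variance_reduction_iff {n : ℕ}
    (f M ML : (Fin n → ℝ) → ℝ) (μL : ℝ)
    (hf_meas : Measurable f) (hf_nonneg : ∀ x, 0 ≤ f x) (hf_one : ∫ x, f x = 1)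
    (hM_meas : Measurable M) (hMf_int : Integrable (fun x => M x * f x))
    (hML_meas : Measurable ML) (hMLf_int : Integrable (fun x => |ML x| * f x))
    (hμL : μL = ∫ x, |ML x| * f x) (hμL_pos : 0 < μL)
    (hdom : ∀ᵐ x, M x * f x ≠ 0 → ML x ≠ 0)
    (hM2f_int : Integrable (fun x => (M x) ^ 2 * f x))
    (hM2MLf_int :
      Integrable (fun x => (if ML x = 0 then 0 else (M x) ^ 2 / |ML x|) * f x)) :
    variance (fun x => if ML x = 0 then 0 else μL * M x / |ML x|)
        (volume.withDensity fun x => ENNReal.ofReal (|ML x| * f x / μL)) <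
      variance M (volume.withDensity fun x => ENNReal.ofReal (f x)) ↔
    0 < cov (volume.withDensity fun x => ENNReal.ofReal (f x))
        (fun x => if ML x = 0 then 0 else (M x) ^ 2 / |ML x|)
        (fun x => |ML x|) := by
  classical
  set h : (Fin n → ℝ) → ℝ := fun x => if ML x = 0 then 0 else (M x) ^ 2 / |ML x| with hh
  set g : (Fin n → ℝ) → ℝ := fun x => if ML x = 0 then 0 else μL * M x / |ML x| with hg
  set ρh : (Fin n → ℝ) → ℝ := fun x => |ML x| * f x / μL with hρh
  set μf := volume.withDensity fun x => ENNReal.ofReal (f x) with hμf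
  set μh := volume.withDensity fun x => ENNReal.ofReal (ρh x) with hμh
  -- basic facts
  have hρh_meas : Measurable ρh := (hML_meas.abs.mul hf_meas).div_const μL
  have hρh_nonneg : ∀ x, 0 ≤ ρh x :=
    fun x => div_nonneg (mul_nonneg (abs_nonneg _) (hf_nonneg x)) hμL_pos.le
  have hf_int : Integrable f := by
    by_contra hc
    rw [integral_undef hc] at hf_one
    exact one_ne_zero hf_one.symm
  have hρh_int : Integrable ρh := (hMLf_int.div_const μL)
  have hρh_one : ∫ x, ρh x = 1 := by
    simp only [hρh, integral_div, ← hμL, div_self hμL_pos.ne']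
  have hML0 : ∀ᵐ x, ML x = 0 → M x * f x = 0 := hdom.mono fun x hx => by
    intro h0; by_contra hne; exact hx hne h0
  -- probability measure instances
  have probf : IsProbabilityMeasure μf := by
    constructor
    rw [hμf, withDensity_apply _ MeasurableSet.univ, setLIntegral_univ,
      ← ofReal_integral_eq_lintegral_ofReal hf_int (Filter.Eventually.of_forall hf_nonneg),
      hf_one, ENNReal.ofReal_one]
  have probh : IsProbabilityMeasure μh := by
    constructor
    rw [hμh, withDensity_apply _ MeasurableSet.univ, setLIntegral_univ,
      ← ofReal_integral_eq_lintegral_ofReal hρh_int (Filter.Eventually.of_forall hρh_nonneg),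
      hρh_one, ENNReal.ofReal_one]
  -- measurability of g, h
  have hsML : MeasurableSet {x | ML x = 0} := hML_meas (measurableSet_singleton 0)
  have hg_meas : Measurable g :=
    Measurable.ite hsML measurable_const ((measurable_const.mul hM_meas).div hML_meas.abs)
  have hh_meas : Measurable h :=
    Measurable.ite hsML measurable_const ((hM_meas.pow_const 2).div hML_meas.abs)
  -- key integrals
  set I1 : ℝ := ∫ x, M x * f x with hI1
  set I2 : ℝ := ∫ x, (M x) ^ 2 * f x with hI2
  set Ih : ℝ := ∫ x, h x * f x with hIh
  -- a.e. equalities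
  have eq_g : ∀ᵐ x, g x * ρh x = M x * f x := hML0.mono fun x hx => by
    by_cases h0 : ML x = 0
    · simp [hg, h0, hx h0]
    · have habs : |ML x| ≠ 0 := abs_ne_zero.2 h0
      simp only [hg, hρh, if_neg h0]
      field_simp
  have eq_g2 : ∀ᵐ x, g x ^ 2 * ρh x = μL * (h x * f x) := Filter.Eventually.of_forall fun x => by
    by_cases h0 : ML x = 0
    · simp [hg, hh, h0]
    · have habs : |ML x| ≠ 0 := abs_ne_zero.2 h0
      simp only [hg, hh, hρh, if_neg h0]
      field_simp
  have eq_hML : ∀ᵐ x, h x * |ML x| * f x = (M x) ^ 2 * f x := hML0.mono fun x hx => by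
    by_cases h0 : ML x = 0
    · have : M x * f x = 0 := hx h0
      simp only [hh, if_pos h0, zero_mul]
      have h2 : M x ^ 2 * f x = M x * f x * M x := by ring
      rw [h2, this, zero_mul]
    · have habs : |ML x| ≠ 0 := abs_ne_zero.2 h0
      simp only [hh, if_neg h0]
      field_simp
  -- variance of M under μf
  have hMsq_int : Integrable (fun x => M x ^ 2) μf := by
    rw [hμf, wd_integrable _ f hf_meas hf_nonneg]
    exact hM2f_int
  have hM_memLp : MemLp M 2 μf :=
    (memLp_two_iff_integrable_sq hM_meas.aestronglyMeasurable).2 hMsq_int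
  have intM : ∫ x, M x ∂μf = I1 := by
    rw [hμf, wd_integral _ f hf_meas hf_nonneg, hI1]
  have intM2 : ∫ x, M x ^ 2 ∂μf = I2 := by
    rw [hμf, wd_integral _ f hf_meas hf_nonneg, hI2]
  have varM : variance M μf = I2 - I1 ^ 2 := by
    rw [variance_eq_sub hM_memLp]
    simp only [Pi.pow_apply]
    rw [intM2, intM]
  -- variance of g under μh
  have hgsq_int : Integrable (fun x => g x ^ 2) μh := by
    rw [hμh, wd_integrable _ ρh hρh_meas hρh_nonneg]
    exact (hM2MLf_int.const_mul μL).congr (eq_g2.mono fun x hx => hx.symm)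
  have hg_memLp : MemLp g 2 μh :=
    (memLp_two_iff_integrable_sq hg_meas.aestronglyMeasurable).2 hgsq_int
  have intg_g : ∫ x, g x ∂μh = I1 := by
    rw [hμh, wd_integral _ ρh hρh_meas hρh_nonneg, hI1]
    exact integral_congr_ae eq_g
  have intg_g2 : ∫ x, g x ^ 2 ∂μh = μL * Ih := by
    rw [hμh, wd_integral _ ρh hρh_meas hρh_nonneg]
    rw [integral_congr_ae eq_g2, integral_const_mul, hIh]
  have varg : variance g μh = μL * Ih - I1 ^ 2 := by
    rw [variance_eq_sub hg_memLp]
    simp only [Pi.pow_apply]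
    rw [intg_g2, intg_g]
  -- covariance computation
  have int_h_f : ∫ x, h x ∂μf = Ih := by
    rw [hμf, wd_integral _ f hf_meas hf_nonneg, hIh]
  have int_ML_f : ∫ x, |ML x| ∂μf = μL := by
    rw [hμf, wd_integral _ f hf_meas hf_nonneg, hμL]
  have covval : cov μf h (fun x => |ML x|) = I2 - μL * Ih := by
    rw [cov, int_h_f, int_ML_f, hμf, wd_integral _ f hf_meas hf_nonneg]
    have expand : ∀ᵐ x, (h x - Ih) * (|ML x| - μL) * f x =
        (M x) ^ 2 * f x - Ih * (|ML x| * f x) - μL * (h x * f x) + (Ih * μL) * f x := by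
      refine eq_hML.mono fun x hx => ?_
      rw [← hx]; ring
    rw [integral_congr_ae expand]
    have i1 : Integrable (fun x => (M x) ^ 2 * f x - Ih * (|ML x| * f x)) :=
      hM2f_int.sub (hMLf_int.const_mul Ih)
    have i2 : Integrable (fun x => (M x) ^ 2 * f x - Ih * (|ML x| * f x)
        - μL * (h x * f x)) := i1.sub (hM2MLf_int.const_mul μL)
    rw [integral_add i2 (hf_int.const_mul (Ih * μL)),
      integral_sub i1 (hM2MLf_int.const_mul μL),
      integral_sub hM2f_int (hMLf_int.const_mul Ih),
      integral_const_mul, integral_const_mul, integral_const_mul, hf_one, ← hμL, ← hI2, ← hIh]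
    ring
  rw [varM, varg, covval]
  constructor <;> intro hlt <;> linarith
end
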